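/- Let K be an algebraically closed field and R = K[x, y, z, a, b, c, d]. Let X be the (2×5)-matrix with rows (x², y², z², a, b) and (x³, y³, z³, c, d). Set u = (z² + (ad − bc))·d − z³·b and w = (y² + u)·d − y³·b + (z² + (ad − bc))·c − z³·a, and let X' be the (2×5)-matrix with rows (x² + w, y² + u, z² + (ad − bc), a, b) and (x³, y³, z³, c, d). Then √(I_2(X)) = √((g_1, g_2, g_3, g_4)), where g_1 is the 2×2 minor of X' on columns 1,2; g_2 is the 2×2 minor of X' on columns 1,3; g_3 is the sum of the 2×2 minors of X' on columns 1,4 and on columns 2,3; and g_4 is the sum of the 2×2 minors of X' on columns 1,5 and on columns 2,4. -/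

import Mathlib

/-- The ideal generated by the `t × t` minors of a matrix. -/
def minorsIdeal {R : Type*} [CommRing R] {m n : ℕ} (t : ℕ)
    (X : Matrix (Fin m) (Fin n) R) : Ideal R :=
  Ideal.span { d | ∃ (r : Fin t → Fin m) (c : Fin t → Fin n),
    Function.Injective r ∧ Function.Injective c ∧ d = (X.submatrix r c).det }

namespace Stmt15

variable (K : Type*) [Field K]

/-- The seven variables `x, y, z, a, b, c, d` of `K[x, y, z, a, b, c, d]`. -/
noncomputable def x : MvPolynomial (Fin 7) K := MvPolynomial.X 0
noncomputable def y : MvPolynomial (Fin 7) K := MvPolynomial.X 1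
noncomputable def z : MvPolynomial (Fin 7) K := MvPolynomial.X 2
noncomputable def a : MvPolynomial (Fin 7) K := MvPolynomial.X 3
noncomputable def b : MvPolynomial (Fin 7) K := MvPolynomial.X 4
noncomputable def c : MvPolynomial (Fin 7) K := MvPolynomial.X 5
noncomputable def d : MvPolynomial (Fin 7) K := MvPolynomial.X 6

/-- The matrix `X` with rows `(x², y², z², a, b)` and `(x³, y³, z³, c, d)`. -/
noncomputable def M : Matrix (Fin 2) (Fin 5) (MvPolynomial (Fin 7) K) :=
  !![x K ^ 2, y K ^ 2, z K ^ 2, a K, b K;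
     x K ^ 3, y K ^ 3, z K ^ 3, c K, d K]

/-- `u = (z² + (ad − bc))·d − z³·b`. -/
noncomputable def u : MvPolynomial (Fin 7) K :=
  (z K ^ 2 + (a K * d K - b K * c K)) * d K - z K ^ 3 * b K

/-- `w = (y² + u)·d − y³·b + (z² + (ad − bc))·c − z³·a`. -/
noncomputable def w : MvPolynomial (Fin 7) K :=
  (y K ^ 2 + u K) * d K - y K ^ 3 * b K
    + (z K ^ 2 + (a K * d K - b K * c K)) * c K - z K ^ 3 * a K

/-- The modified matrix `X'` with rows `(x² + w, y² + u, z² + (ad − bc), a, b)` and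
`(x³, y³, z³, c, d)`. -/
noncomputable def M' : Matrix (Fin 2) (Fin 5) (MvPolynomial (Fin 7) K) :=
  !![x K ^ 2 + w K, y K ^ 2 + u K, z K ^ 2 + (a K * d K - b K * c K), a K, b K;
     x K ^ 3, y K ^ 3, z K ^ 3, c K, d K]

/-- The `2 × 2` minor of `X'` on columns `i, j`. -/
noncomputable def minor (i j : Fin 5) : MvPolynomial (Fin 7) K :=
  M' K 0 i * M' K 1 j - M' K 0 j * M' K 1 i

end Stmt15

/-!
`X'` arises from `X` by adding to the entries of its first row the minors `[25] + [34]`, `[35]`,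
`[45]` of `X'` itself. This triangular pattern lets each added entry be expressed through minors
of `X`, and conversely, so `I₂(X) = I₂(X')`, which contains the `gᵢ`.

For the other inclusion, by the Nullstellensatz it suffices to show that all minors of `X'`
vanish at a common zero of the `gᵢ`. There, the Plücker relations among the minors split
`g₃` and `g₄` into `[14] = [23] = 0` and `[15] = [24] = 0`. Over a domain, a nonzero column
whose minors all vanish forces every minor to vanish. If column 1 is zero instead, then `x = 0`
and its top entry gives `[25] + [34] = 0`, while Plücker gives `[25]·[34] = 0`; so all minors
with column 2 vanish. The same step on columns 2 and 3 gives `[35] = 0` and `[45] = 0`, after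
which columns 1 to 3 are zero and every minor vanishes. (Columns are numbered from 1 here and
from 0 in the code: `[25]` is `twoMinor 1 4`.)
-/

theorem eq_zero_and_eq_zero_of_add_eq_zero_of_mul_eq_zero {R : Type*} [CommRing R] [IsReduced R]
    {s t : R} (hadd : s + t = 0) (hmul : s * t = 0) : s = 0 ∧ t = 0 := by
  have hs : s = 0 := IsReduced.eq_zero s ⟨2, by linear_combination s * hadd - hmul⟩
  exact ⟨hs, by linear_combination hadd - hs⟩

namespace Matrix

variable {R ι : Type*} [CommRing R]

def twoMinor (A : Matrix (Fin 2) ι R) (i j : ι) : R := A 0 i * A 1 j - A 0 j * A 1 i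

@[simp]
theorem twoMinor_self (A : Matrix (Fin 2) ι R) (i : ι) : A.twoMinor i i = 0 := sub_self _

theorem twoMinor_swap (A : Matrix (Fin 2) ι R) (i j : ι) : A.twoMinor j i = -A.twoMinor i j := by
  unfold twoMinor; ring

theorem twoMinor_eq_zero_of_col_eq_zero_left {A : Matrix (Fin 2) ι R} {k : ι} (hk : Aᵀ k = 0)
    (j : ι) : A.twoMinor k j = 0 := by
  simp [twoMinor, show A 0 k = 0 from congrFun hk 0, show A 1 k = 0 from congrFun hk 1]

theorem twoMinor_eq_zero_of_col_eq_zero_right {A : Matrix (Fin 2) ι R} {k : ι} (hk : Aᵀ k = 0)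
    (i : ι) : A.twoMinor i k = 0 := by
  rw [twoMinor_swap, twoMinor_eq_zero_of_col_eq_zero_left hk, neg_zero]

theorem map_twoMinor {S F : Type*} [CommRing S] [FunLike F R S] [RingHomClass F R S] (f : F)
    (A : Matrix (Fin 2) ι R) (i j : ι) :
    f (A.twoMinor i j) = (A.map f).twoMinor i j := by
  simp [twoMinor]

theorem twoMinor_plucker (A : Matrix (Fin 2) ι R) (i j k l : ι) :
    A.twoMinor i j * A.twoMinor k l - A.twoMinor i k * A.twoMinor j l
      + A.twoMinor i l * A.twoMinor j k = 0 := by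
  unfold twoMinor; ring

theorem mul_twoMinor (A : Matrix (Fin 2) ι R) (r : Fin 2) (i j k : ι) :
    A r k * A.twoMinor i j = A r i * A.twoMinor k j - A r j * A.twoMinor k i := by
  fin_cases r <;> simp only [twoMinor, Fin.zero_eta, Fin.mk_one] <;> ring

theorem twoMinor_eq_zero_of_col_ne_zero [IsDomain R] {A : Matrix (Fin 2) ι R} {k : ι} (hk : Aᵀ k ≠ 0)
    (h : ∀ j, A.twoMinor k j = 0) (i j : ι) : A.twoMinor i j = 0 := by
  obtain ⟨r, hr⟩ := Function.ne_iff.mp hk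
  refine (mul_eq_zero.mp ?_).resolve_left hr
  rw [transpose_apply, mul_twoMinor A r i j k, h, h, mul_zero, mul_zero, sub_zero]

theorem twoMinor_sub_twoMinor {A A' : Matrix (Fin 2) ι R} (h1 : A' 1 = A 1) (i j : ι) :
    A'.twoMinor i j - A.twoMinor i j = (A' 0 i - A 0 i) * A 1 j - (A' 0 j - A 0 j) * A 1 i := by
  simp only [twoMinor, h1]; ring

theorem twoMinor_mem_of_sub_mem {A A' : Matrix (Fin 2) ι R} {I : Ideal R} (h1 : A' 1 = A 1)
    {i j : ι} (hm : A.twoMinor i j ∈ I) (hi : A' 0 i - A 0 i ∈ I) (hj : A' 0 j - A 0 j ∈ I) :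
    A'.twoMinor i j ∈ I := by
  rw [← sub_add_cancel (A'.twoMinor i j) (A.twoMinor i j), twoMinor_sub_twoMinor h1]
  exact I.add_mem (I.sub_mem (I.mul_mem_right _ hi) (I.mul_mem_right _ hj)) hm

variable {n : ℕ}

theorem twoMinor_mem_minorsIdeal (A : Matrix (Fin 2) (Fin n) R) (i j : Fin n) :
    A.twoMinor i j ∈ minorsIdeal 2 A := by
  rcases eq_or_ne i j with rfl | hij
  · simp
  refine Ideal.subset_span ⟨id, ![i, j], Function.injective_id, ?_, ?_⟩
  · simpa [Fin.cons_injective_iff] using hij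
  · simp [det_fin_two, twoMinor]

theorem minorsIdeal_two_le_iff {A : Matrix (Fin 2) (Fin n) R} {I : Ideal R} :
    minorsIdeal 2 A ≤ I ↔ ∀ i j, A.twoMinor i j ∈ I := by
  refine ⟨fun h i j => h (twoMinor_mem_minorsIdeal A i j), fun h => Ideal.span_le.mpr ?_⟩
  rintro _ ⟨r, c, hr, -, rfl⟩
  have hne : r 0 ≠ r 1 := hr.ne zero_ne_one
  rw [det_fin_two]
  simp only [submatrix_apply]
  generalize r 0 = p, r 1 = q at hne ⊢
  fin_cases p <;> fin_cases q <;> simp at hne ⊢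
  · exact h _ _
  · convert h (c 1) (c 0) using 1
    unfold twoMinor; ring

theorem minorsIdeal_two_le_of_sub_mem {A A' : Matrix (Fin 2) (Fin n) R} {I : Ideal R}
    (h1 : A' 1 = A 1) (hA : minorsIdeal 2 A ≤ I) (ht : ∀ j, A' 0 j - A 0 j ∈ I) :
    minorsIdeal 2 A' ≤ I :=
  minorsIdeal_two_le_iff.mpr fun i j =>
    twoMinor_mem_of_sub_mem h1 (minorsIdeal_two_le_iff.mp hA i j) (ht i) (ht j)

theorem twoMinor_eq_zero_or_col_eq_zero_of_cube [IsDomain R] {A : Matrix (Fin 2) ι R} {k : ι}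
    {e s : R} (h1 : A 1 k = e ^ 3) (h0 : A 0 k = e ^ 2 + s) (h : ∀ j, A.twoMinor k j = 0) :
    (∀ i j, A.twoMinor i j = 0) ∨ (Aᵀ k = 0 ∧ s = 0) := by
  by_cases hk : Aᵀ k = 0
  · have he : e = 0 := pow_eq_zero_iff three_ne_zero |>.mp (h1 ▸ congrFun hk 1)
    have hs : s = 0 := by simpa [he, show A 0 k = 0 from congrFun hk 0] using h0.symm
    exact .inr ⟨hk, hs⟩
  · exact .inl (twoMinor_eq_zero_of_col_ne_zero hk h)

theorem twoMinor_eq_zero_of_staircase [IsDomain R] (N : Matrix (Fin 2) (Fin 5) R) (x y z : R)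
    (hx : N 1 0 = x ^ 3) (hy : N 1 1 = y ^ 3) (hz : N 1 2 = z ^ 3)
    (h0 : N 0 0 = x ^ 2 + (N.twoMinor 1 4 + N.twoMinor 2 3))
    (h1 : N 0 1 = y ^ 2 + N.twoMinor 2 4) (h2 : N 0 2 = z ^ 2 + N.twoMinor 3 4)
    (g1 : N.twoMinor 0 1 = 0) (g2 : N.twoMinor 0 2 = 0)
    (g3 : N.twoMinor 0 3 + N.twoMinor 1 2 = 0) (g4 : N.twoMinor 0 4 + N.twoMinor 1 3 = 0)
    (i j : Fin 5) : N.twoMinor i j = 0 := by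
  obtain ⟨h03, h12⟩ := eq_zero_and_eq_zero_of_add_eq_zero_of_mul_eq_zero g3 <| by
    linear_combination N.twoMinor_plucker 0 1 2 3 - N.twoMinor 2 3 * g1 + N.twoMinor 1 3 * g2
  obtain ⟨h04, h13⟩ := eq_zero_and_eq_zero_of_add_eq_zero_of_mul_eq_zero g4 <| by
    linear_combination N.twoMinor_plucker 0 1 3 4 - N.twoMinor 3 4 * g1 + N.twoMinor 1 4 * h03
  have h14_23 : N.twoMinor 1 4 * N.twoMinor 2 3 = 0 := by
    linear_combination N.twoMinor_plucker 1 2 3 4 - N.twoMinor 3 4 * h12 + N.twoMinor 2 4 * h13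
  rcases twoMinor_eq_zero_or_col_eq_zero_of_cube hx h0 (by
      intro j; fin_cases j <;> simp [g1, g2, h03, h04]) with hall | ⟨hc0, h14_add_23⟩
  · exact hall i j
  obtain ⟨h14, h23⟩ := eq_zero_and_eq_zero_of_add_eq_zero_of_mul_eq_zero h14_add_23 h14_23
  rcases twoMinor_eq_zero_or_col_eq_zero_of_cube hy h1 (by
      intro j; fin_cases j <;> simp [twoMinor_eq_zero_of_col_eq_zero_right hc0, h12, h13, h14])
    with hall | ⟨hc1, h24⟩
  · exact hall i j
  rcases twoMinor_eq_zero_or_col_eq_zero_of_cube hz h2 (by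
      intro j; fin_cases j <;> simp [twoMinor_eq_zero_of_col_eq_zero_right hc0,
        twoMinor_eq_zero_of_col_eq_zero_right hc1, h23, h24])
    with hall | ⟨hc2, h34⟩
  · exact hall i j
  fin_cases i <;> fin_cases j <;> simp [twoMinor_eq_zero_of_col_eq_zero_left hc0,
    twoMinor_eq_zero_of_col_eq_zero_left hc1, twoMinor_eq_zero_of_col_eq_zero_left hc2,
    twoMinor_eq_zero_of_col_eq_zero_right hc0, twoMinor_eq_zero_of_col_eq_zero_right hc1,
    twoMinor_eq_zero_of_col_eq_zero_right hc2, twoMinor_swap N 3 4, h34]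

end Matrix

namespace Stmt15

variable (K : Type*) [Field K]

open Matrix MvPolynomial

theorem M'_zero_zero :
    M' K 0 0 = x K ^ 2 + ((M' K).twoMinor 1 4 + (M' K).twoMinor 2 3) := by
  simp [M', twoMinor, w]; ring

theorem M'_zero_one : M' K 0 1 = y K ^ 2 + (M' K).twoMinor 2 4 := by
  simp [M', twoMinor, u]; ring

theorem M'_zero_two : M' K 0 2 = z K ^ 2 + (M' K).twoMinor 3 4 := by
  simp [M', twoMinor]

theorem minor_eq_twoMinor (i j : Fin 5) : minor K i j = (M' K).twoMinor i j := rfl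

theorem M'_one : M' K 1 = M K 1 := by
  ext j; fin_cases j <;> rfl

theorem M_zero_sub_M'_zero_mem (j : Fin 5) : M K 0 j - M' K 0 j ∈ minorsIdeal 2 (M' K) := by
  have hm := twoMinor_mem_minorsIdeal (M' K)
  rw [← neg_mem_iff, neg_sub]
  fin_cases j
  · simpa [M'_zero_zero, M] using add_mem (hm 1 4) (hm 2 3)
  · simpa [M'_zero_one, M] using hm 2 4
  · simpa [M'_zero_two, M] using hm 3 4
  all_goals simp [M, M']

theorem M'_zero_sub_M_zero_mem (j : Fin 5) : M' K 0 j - M K 0 j ∈ minorsIdeal 2 (M K) := by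
  have hm := twoMinor_mem_minorsIdeal (M K)
  have h3 : M' K 0 3 - M K 0 3 ∈ minorsIdeal 2 (M K) := by simp [M, M']
  have h4 : M' K 0 4 - M K 0 4 ∈ minorsIdeal 2 (M K) := by simp [M, M']
  have h2 : M' K 0 2 - M K 0 2 ∈ minorsIdeal 2 (M K) := by
    simpa [M'_zero_two, M] using twoMinor_mem_of_sub_mem (M'_one K) (hm 3 4) h3 h4
  have h1 : M' K 0 1 - M K 0 1 ∈ minorsIdeal 2 (M K) := by
    simpa [M'_zero_one, M] using twoMinor_mem_of_sub_mem (M'_one K) (hm 2 4) h2 h4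
  have h0 : M' K 0 0 - M K 0 0 ∈ minorsIdeal 2 (M K) := by
    simpa [M'_zero_zero, M] using add_mem (twoMinor_mem_of_sub_mem (M'_one K) (hm 1 4) h1 h4)
      (twoMinor_mem_of_sub_mem (M'_one K) (hm 2 3) h2 h3)
  fin_cases j
  exacts [h0, h1, h2, h3, h4]

theorem minorsIdeal_M_eq : minorsIdeal 2 (M K) = minorsIdeal 2 (M' K) :=
  le_antisymm (minorsIdeal_two_le_of_sub_mem (M'_one K).symm le_rfl (M_zero_sub_M'_zero_mem K))
    (minorsIdeal_two_le_of_sub_mem (M'_one K) le_rfl (M'_zero_sub_M_zero_mem K))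

noncomputable def gIdeal : Ideal (MvPolynomial (Fin 7) K) :=
  Ideal.span {minor K 0 1, minor K 0 2, minor K 0 3 + minor K 1 2, minor K 0 4 + minor K 1 3}

theorem gIdeal_le_minorsIdeal_M' : gIdeal K ≤ minorsIdeal 2 (M' K) := by
  simp only [gIdeal, Ideal.span_le, Set.insert_subset_iff, Set.singleton_subset_iff, SetLike.mem_coe]
  have hm := twoMinor_mem_minorsIdeal (M' K)
  exact ⟨hm 0 1, hm 0 2, add_mem (hm 0 3) (hm 1 2), add_mem (hm 0 4) (hm 1 3)⟩

theorem minorsIdeal_M'_le_radical_gIdeal [IsAlgClosed K] :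
    minorsIdeal 2 (M' K) ≤ (gIdeal K).radical := by
  rw [gIdeal, ← vanishingIdeal_zeroLocus_eq_radical (K := K), minorsIdeal_two_le_iff]
  intro i j v hv
  simp only [zeroLocus_span, Set.mem_ofPred_eq, Set.forall_mem_insert, Set.mem_singleton_iff,
    forall_eq, map_add, minor_eq_twoMinor, map_twoMinor] at hv
  obtain ⟨g1, g2, g3, g4⟩ := hv
  rw [map_twoMinor]
  refine twoMinor_eq_zero_of_staircase _ (v 0) (v 1) (v 2) ?_ ?_ ?_ ?_ ?_ ?_ g1 g2 g3 g4 i j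
  · simp [M', x]
  · simp [M', y]
  · simp [M', z]
  · rw [map_apply, M'_zero_zero]; simp [map_twoMinor, x]
  · rw [map_apply, M'_zero_one]; simp [map_twoMinor, y]
  · rw [map_apply, M'_zero_two]; simp [map_twoMinor, z]

/-- `√(I₂(X)) = √((g₁, g₂, g₃, g₄))`, where `g₁ = [12|12]`, `g₂ = [12|13]`,
`g₃ = [12|14] + [12|23]` and `g₄ = [12|15] + [12|24]` are (sums of) minors of `X'`. -/
theorem stmt15 [IsAlgClosed K] :
    (minorsIdeal 2 (M K)).radical =
      (Ideal.span {minor K 0 1, minor K 0 2,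
        minor K 0 3 + minor K 1 2,
        minor K 0 4 + minor K 1 3} : Ideal (MvPolynomial (Fin 7) K)).radical := by
  rw [minorsIdeal_M_eq]
  exact le_antisymm (Ideal.radical_le_radical_iff.mpr (minorsIdeal_M'_le_radical_gIdeal K))
    (Ideal.radical_mono (gIdeal_le_minorsIdeal_M' K))

end Stmt15
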